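/- Let g : ℝ² → [0,∞) be measurable with ∫_{ℝ²} g(x)(1 + ln(1+|x|²)) dx < ∞ and ∫_{ℝ²} g(x) ln⁺ g(x) dx < ∞. Then x ↦ g(x) ln g(x) is integrable on ℝ² and ∫_{ℝ²} g(x) ln g(x) dx ≥ −2 ∫_{ℝ²} g(x) ln(1+|x|²) dx − (ln π) ∫_{ℝ²} g(x) dx − 1/e. -/

import Mathlib

/-!
Gibbs' inequality against the probability density `m(x) = (π (1 + |x|²)²)⁻¹`: pointwise,
`s ln s ≥ s ln t - t / e` for `s ≥ 0`, `t > 0`, and with `s = g(x)`, `t = m(x)` the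
right-hand side integrates to `-2 ∫ g ln(1 + |x|²) - (ln π) ∫ g - 1/e`. The same pointwise
bound, together with `g ln g ≤ g ln⁺ g`, squeezes `g ln g` between two integrable functions.
-/

open MeasureTheory Set Filter Real Module
open scoped Topology

lemma mul_log_sub_div_exp_le_mul_log {s t : ℝ} (hs : 0 ≤ s) (ht : 0 < t) :
    s * log t - t / exp 1 ≤ s * log s := by
  rcases hs.eq_or_lt with rfl | hs
  · simp only [zero_mul, zero_sub, neg_nonpos]
    positivity
  · have h := log_le_sub_one_of_pos (show 0 < t / (exp 1 * s) by positivity)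
    rw [log_div ht.ne' (by positivity), log_mul (exp_ne_zero 1) hs.ne', log_exp] at h
    have hst : s * (t / (exp 1 * s)) = t / exp 1 := by field_simp
    nlinarith [mul_le_mul_of_nonneg_left (sub_le_iff_le_add.mp h) hs.le]

section Gibbs

variable {α : Type*} [MeasurableSpace α] {μ : Measure α} {g m : α → ℝ}

lemma integrable_mul_log_of_density (hg : AEStronglyMeasurable g μ)
    (hg0 : ∀ x, 0 ≤ g x) (hm0 : ∀ x, 0 < m x) (hm : Integrable m μ)
    (hgm : Integrable (fun x => g x * log (m x)) μ)
    (hent : Integrable (fun x => g x * max (log (g x)) 0) μ) :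
    Integrable (fun x => g x * log (g x)) μ :=
  integrable_of_le_of_le (continuous_mul_log.comp_aestronglyMeasurable hg)
    (ae_of_all _ fun x => mul_log_sub_div_exp_le_mul_log (hg0 x) (hm0 x))
    (ae_of_all _ fun x => mul_le_mul_of_nonneg_left (le_max_left _ _) (hg0 x))
    (hgm.sub (hm.div_const _)) hent

lemma integral_mul_log_density_sub_le (hg0 : ∀ x, 0 ≤ g x) (hm0 : ∀ x, 0 < m x)
    (hm : Integrable m μ) (hgm : Integrable (fun x => g x * log (m x)) μ)
    (hgg : Integrable (fun x => g x * log (g x)) μ) :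
    ∫ x, g x * log (m x) ∂μ - (∫ x, m x ∂μ) / exp 1 ≤ ∫ x, g x * log (g x) ∂μ := by
  rw [← integral_div, ← integral_sub hgm (hm.div_const _)]
  exact integral_mono (hgm.sub (hm.div_const _)) hgg fun x =>
    mul_log_sub_div_exp_le_mul_log (hg0 x) (hm0 x)

end Gibbs

lemma integral_Ioi_mul_inv_one_add_sq_sq :
    ∫ r in Ioi (0 : ℝ), r * ((1 + r ^ 2) ^ 2)⁻¹ = 1 / 2 := by
  have hderiv : ∀ x ∈ Ici (0 : ℝ), HasDerivAt (fun r : ℝ => -(2 * (1 + r ^ 2))⁻¹)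
      (x * ((1 + x ^ 2) ^ 2)⁻¹) x := by
    intro x _
    have h := ((((hasDerivAt_pow 2 x).const_add 1).const_mul 2).inv (by positivity)).neg
    refine h.congr_deriv ?_
    field_simp
    ring
  have hlim : Tendsto (fun r : ℝ => -(2 * (1 + r ^ 2))⁻¹) atTop (𝓝 0) := by
    rw [← neg_zero]
    exact ((tendsto_atTop_add_const_left _ 1 (tendsto_pow_atTop two_ne_zero)).const_mul_atTop
      two_pos).inv_tendsto_atTop.neg
  rw [integral_Ioi_of_hasDerivAt_of_nonneg' hderiv (fun x hx => by have := hx.out.le; positivity)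
    hlim]
  norm_num

section SphericalDensity

variable {E : Type*} [NormedAddCommGroup E]

/-- The density of the stereographic projection of the normalized area measure on the unit
sphere `S² ⊂ ℝ³` onto the plane. -/
noncomputable def sphericalDensity (x : E) : ℝ := π⁻¹ * ((1 + ‖x‖ ^ 2) ^ 2)⁻¹

lemma sphericalDensity_pos (x : E) : 0 < sphericalDensity x := by
  unfold sphericalDensity
  positivity

lemma log_sphericalDensity (x : E) :
    log (sphericalDensity x) = -log π - 2 * log (1 + ‖x‖ ^ 2) := by
  rw [sphericalDensity, log_mul (inv_ne_zero pi_pos.ne') (by positivity), log_inv, log_inv, log_pow]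
  push_cast
  ring

lemma integrable_inv_one_add_norm_sq_sq [NormedSpace ℝ E] [FiniteDimensional ℝ E]
    [MeasurableSpace E] [BorelSpace E] (μ : Measure E) [μ.IsAddHaarMeasure]
    (hE : finrank ℝ E < 4) : Integrable (fun x : E => ((1 + ‖x‖ ^ 2) ^ 2)⁻¹) μ := by
  refine ((integrable_one_add_norm (μ := μ) (r := 4) (by exact_mod_cast hE)).const_mul 4).mono'
    (by fun_prop) (ae_of_all _ fun x => ?_)
  have hx := norm_nonneg x
  have hpow : (1 + ‖x‖) ^ (-4 : ℝ) = ((1 + ‖x‖) ^ 4)⁻¹ := by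
    rw [rpow_neg (by positivity)]
    norm_cast
  rw [norm_inv, norm_pow, Real.norm_of_nonneg (by positivity), hpow, ← div_eq_mul_inv,
    le_div_iff₀ (by positivity), inv_mul_le_iff₀ (by positivity)]
  nlinarith [sq_nonneg (1 - ‖x‖)]

variable [InnerProductSpace ℝ E] [FiniteDimensional ℝ E] [MeasurableSpace E] [BorelSpace E]

lemma integrable_sphericalDensity (hE : finrank ℝ E = 2) :
    Integrable (sphericalDensity : E → ℝ) :=
  (integrable_inv_one_add_norm_sq_sq volume (by rw [hE]; norm_num)).const_mul _

lemma integral_sphericalDensity (hE : finrank ℝ E = 2) : ∫ x : E, sphericalDensity x = 1 := by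
  have : Nontrivial E := nontrivial_of_finrank_eq_succ hE
  unfold sphericalDensity
  rw [integral_const_mul, integral_fun_norm_addHaar volume fun r => ((1 + r ^ 2) ^ 2)⁻¹,
    measureReal_def, InnerProductSpace.volume_ball, hE]
  simp only [Nat.add_one_sub_one, pow_one, smul_eq_mul]
  rw [integral_Ioi_mul_inv_one_add_sq_sq]
  norm_num [sq_sqrt pi_pos.le, ENNReal.toReal_ofReal pi_pos.le]
  field_simp

end SphericalDensity

/-- Lower bound for the entropy: if `g ≥ 0` on `ℝ²` satisfies
`∫ g (1 + ln(1+|x|²)) < ∞` and `∫ g ln⁺ g < ∞`, then `g ln g` is integrable and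
`∫ g ln g ≥ −2 ∫ g ln(1+|x|²) − (ln π) ∫ g − 1/e`. -/
theorem entropy_lower_bound (g : EuclideanSpace ℝ (Fin 2) → ℝ)
    (hmeas : Measurable g) (hnonneg : ∀ x, 0 ≤ g x)
    (hint : Integrable (fun x => g x * (1 + Real.log (1 + ‖x‖ ^ 2))) volume)
    (hent : Integrable (fun x => g x * max (Real.log (g x)) 0) volume) :
    Integrable (fun x => g x * Real.log (g x)) volume ∧
    (∫ x, g x * Real.log (g x)) ≥
      -(2 * (∫ x, g x * Real.log (1 + ‖x‖ ^ 2))) - Real.log Real.pi * (∫ x, g x) -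
        1 / Real.exp 1 := by
  have hdim : finrank ℝ (EuclideanSpace ℝ (Fin 2)) = 2 := finrank_euclideanSpace_fin
  have hg : Integrable g := hint.mono' hmeas.aestronglyMeasurable <| ae_of_all _ fun x => by
    have : 0 ≤ log (1 + ‖x‖ ^ 2) := log_nonneg (by nlinarith [sq_nonneg ‖x‖])
    rw [Real.norm_of_nonneg (hnonneg x)]
    nlinarith [hnonneg x]
  have hgL : Integrable fun x => g x * log (1 + ‖x‖ ^ 2) :=
    (hint.sub hg).congr (ae_of_all _ fun x => by simp only [Pi.sub_apply]; ring)
  have hlog_density : (fun x => g x * log (sphericalDensity x)) =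
      fun x => -log π * g x - 2 * (g x * log (1 + ‖x‖ ^ 2)) := by
    ext x
    rw [log_sphericalDensity]
    ring
  have hgm : Integrable fun x => g x * log (sphericalDensity x) := by
    rw [hlog_density]
    exact (hg.const_mul _).sub (hgL.const_mul _)
  have hgg := integrable_mul_log_of_density hmeas.aestronglyMeasurable hnonneg sphericalDensity_pos
    (integrable_sphericalDensity hdim) hgm hent
  refine ⟨hgg, ?_⟩
  have hbound := integral_mul_log_density_sub_le hnonneg sphericalDensity_pos
    (integrable_sphericalDensity hdim) hgm hgg
  rw [integral_sphericalDensity hdim, hlog_density, integral_sub (hg.const_mul _)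
    (hgL.const_mul _), integral_const_mul, integral_const_mul] at hbound
  linarith
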